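/- Let D ≥ 1, let P be a nonempty compact convex subset of the set of density matrices on ℂ^D, and let Φ be a quantum channel (CPTP map) on D×D complex matrices such that Φ(σ) ∈ P for every σ ∈ P. Then for every density matrix ρ, min_{σ ∈ P} T(Φ(ρ), σ) ≤ min_{σ ∈ P} T(ρ, σ) (monotonicity of the distance to P under channels preserving P). -/

import Mathlib

open ComplexOrder

noncomputable def traceNorm {n : Type*} [Fintype n] [DecidableEq n]
    (A : Matrix n n ℂ) : ℝ :=
  ((Matrix.posSemidef_conjTranspose_mul_self A).1.eigenvectorUnitary.1 *
      Matrix.diagonal (((↑) : ℝ → ℂ) ∘ (Real.sqrt ·) ∘ (Matrix.posSemidef_conjTranspose_mul_self A).1.eigenvalues) *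
      (star (Matrix.posSemidef_conjTranspose_mul_self A).1.eigenvectorUnitary :
        Matrix n n ℂ)).trace.re

/-- Trace distance between matrices: half the trace norm of the difference. -/
noncomputable def traceDist {n : Type*} [Fintype n] [DecidableEq n]
    (ρ σ : Matrix n n ℂ) : ℝ :=
  traceNorm (ρ - σ) / 2

/-- A density matrix: positive semidefinite with trace one. -/
def IsDensityMatrix {n : Type*} [Fintype n] [DecidableEq n]
    (ρ : Matrix n n ℂ) : Prop :=
  ρ.PosSemidef ∧ ρ.trace = 1

/-- The extension Φ ⊗ id of a map on D×D matrices to matrices indexed by Fin D × Fin k. -/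
noncomputable def extendChannel {D k : ℕ}
    (Φ : Matrix (Fin D) (Fin D) ℂ →ₗ[ℂ] Matrix (Fin D) (Fin D) ℂ)
    (M : Matrix (Fin D × Fin k) (Fin D × Fin k) ℂ) :
    Matrix (Fin D × Fin k) (Fin D × Fin k) ℂ :=
  Matrix.of fun p q => Φ (Matrix.of fun i j => M (i, p.2) (j, q.2)) p.1 q.1

/-- Complete positivity: for every k ≥ 1, Φ ⊗ id sends positive semidefinite
matrices to positive semidefinite matrices. -/
def IsCompletelyPositive {D : ℕ}
    (Φ : Matrix (Fin D) (Fin D) ℂ →ₗ[ℂ] Matrix (Fin D) (Fin D) ℂ) : Prop :=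
  ∀ k : ℕ, 1 ≤ k → ∀ M : Matrix (Fin D × Fin k) (Fin D × Fin k) ℂ,
    M.PosSemidef → (extendChannel Φ M).PosSemidef

section Aux

open Matrix

variable {n : Type*} [Fintype n] [DecidableEq n]

lemma psd_diag_re_nonneg {M : Matrix n n ℂ} (hM : M.PosSemidef) (i : n) :
    0 ≤ (M i i).re := by
  have h := hM.diag_nonneg (i := i)
  rw [Complex.le_def] at h
  simpa using h.1

lemma psd_trace_re_nonneg {M : Matrix n n ℂ} (hM : M.PosSemidef) :
    0 ≤ M.trace.re := by
  rw [Matrix.trace, Complex.re_sum]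
  exact Finset.sum_nonneg fun i _ => psd_diag_re_nonneg hM i

lemma traceNorm_nonneg (A : Matrix n n ℂ) : 0 ≤ traceNorm A :=
  by
    rw [traceNorm, Matrix.trace_mul_cycle, Unitary.coe_star_mul_self, one_mul,
      Matrix.trace_diagonal, Complex.re_sum]
    exact Finset.sum_nonneg fun i _ => by simp [Real.sqrt_nonneg]

lemma conj_diag_mul (U : Matrix.unitaryGroup n ℂ) (c d : n → ℂ) :
    ((U : Matrix n n ℂ) * diagonal c * star (U : Matrix n n ℂ)) *
      ((U : Matrix n n ℂ) * diagonal d * star (U : Matrix n n ℂ)) =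
    (U : Matrix n n ℂ) * diagonal (fun i => c i * d i) * star (U : Matrix n n ℂ) := by
  have h : star (U : Matrix n n ℂ) * (U : Matrix n n ℂ) = 1 :=
    (Matrix.mem_unitaryGroup_iff').mp U.2
  simp only [mul_assoc]
  rw [← mul_assoc (star (U : Matrix n n ℂ)) (U : Matrix n n ℂ), h, one_mul,
    ← mul_assoc (diagonal c), diagonal_mul_diagonal]

lemma trace_conj_diag (U : Matrix.unitaryGroup n ℂ) (d : n → ℂ) :
    ((U : Matrix n n ℂ) * diagonal d * star (U : Matrix n n ℂ)).trace = ∑ i, d i := by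
  have h : star (U : Matrix n n ℂ) * (U : Matrix n n ℂ) = 1 :=
    (Matrix.mem_unitaryGroup_iff').mp U.2
  rw [Matrix.trace_mul_cycle, h, one_mul, Matrix.trace_diagonal]

lemma conj_diag_psd (U : Matrix.unitaryGroup n ℂ) {d : n → ℝ} (hd : ∀ i, 0 ≤ d i) :
    ((U : Matrix n n ℂ) * diagonal (fun i => (d i : ℂ)) * star (U : Matrix n n ℂ)).PosSemidef := by
  rw [Matrix.star_eq_conjTranspose]
  exact (Matrix.posSemidef_diagonal_iff.mpr fun i => by
    rw [Complex.zero_le_real]; exact hd i).mul_mul_conjTranspose_same _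

lemma traceNorm_eq_sum_abs {A : Matrix n n ℂ} (hA : A.IsHermitian) :
    traceNorm A = ∑ i, |hA.eigenvalues i| := by
  set U := hA.eigenvectorUnitary with hU
  set B := (U : Matrix n n ℂ) * diagonal (fun i => ((|hA.eigenvalues i| : ℝ) : ℂ)) *
    star (U : Matrix n n ℂ) with hBdef
  have hB : B.PosSemidef := conj_diag_psd U fun i => abs_nonneg _
  have hB2 : B ^ 2 = Aᴴ * A := by
    have h1 : Aᴴ * A = (U : Matrix n n ℂ) *
        diagonal (fun i => ((hA.eigenvalues i : ℝ) : ℂ) * ((hA.eigenvalues i : ℝ) : ℂ))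
        * star (U : Matrix n n ℂ) := by
      rw [hA.eq]
      conv_lhs => rw [hA.spectral_theorem]
      exact conj_diag_mul U _ _
    rw [pow_two, hBdef, conj_diag_mul,
      show (fun i => ((|hA.eigenvalues i| : ℝ) : ℂ) * ((|hA.eigenvalues i| : ℝ) : ℂ)) =
        (fun i => ((hA.eigenvalues i : ℝ) : ℂ) * ((hA.eigenvalues i : ℝ) : ℂ)) from
        funext fun i => by
          rw [← Complex.ofReal_mul, ← Complex.ofReal_mul, abs_mul_abs_self], h1]
  have hsqrt : B = cfc Real.sqrt (Aᴴ * A) := by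
    have hAA : Aᴴ * A = cfc (fun x : ℝ => x ^ 2) A := by
      rw [cfc_pow_id A 2 hA.isSelfAdjoint, hA.eq, pow_two]
    rw [hAA, ← cfc_comp Real.sqrt (fun x : ℝ => x ^ 2) A hA.isSelfAdjoint]
    have hf : (Real.sqrt ∘ fun x : ℝ => x ^ 2) = fun x => |x| :=
      funext fun x => Real.sqrt_sq_eq_abs x
    rw [hf, hA.cfc_eq, hBdef, Matrix.IsHermitian.cfc]
    exact (Unitary.conjStarAlgAut_apply _ _).symm
  have hTN : traceNorm A = (cfc Real.sqrt (Aᴴ * A)).trace.re := by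
    rw [traceNorm, (Matrix.posSemidef_conjTranspose_mul_self A).1.cfc_eq]; rfl
  rw [hTN, ← hsqrt, hBdef, trace_conj_diag]
  rw [Complex.re_sum]
  simp

lemma conj_psd (U : Matrix.unitaryGroup n ℂ) {M : Matrix n n ℂ} (hM : M.PosSemidef) :
    (star (U : Matrix n n ℂ) * M * (U : Matrix n n ℂ)).PosSemidef := by
  rw [Matrix.star_eq_conjTranspose]
  exact hM.conjTranspose_mul_mul_same _

lemma trace_conj (U : Matrix.unitaryGroup n ℂ) (M : Matrix n n ℂ) :
    (star (U : Matrix n n ℂ) * M * (U : Matrix n n ℂ)).trace = M.trace := by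
  have h : (U : Matrix n n ℂ) * star (U : Matrix n n ℂ) = 1 :=
    (Matrix.mem_unitaryGroup_iff).mp U.2
  rw [Matrix.trace_mul_cycle, h, one_mul]

lemma traceNorm_sub_le {X Y : Matrix n n ℂ} (hX : X.PosSemidef) (hY : Y.PosSemidef) :
    traceNorm (X - Y) ≤ X.trace.re + Y.trace.re := by
  have hA : (X - Y).IsHermitian := hX.1.sub hY.1
  rw [traceNorm_eq_sum_abs hA]
  set U := hA.eigenvectorUnitary with hU
  have hdiag : star (U : Matrix n n ℂ) * (X - Y) * (U : Matrix n n ℂ) =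
      diagonal (RCLike.ofReal ∘ hA.eigenvalues) := by
    have := hA.conjStarAlgAut_star_eigenvectorUnitary
    rw [Unitary.conjStarAlgAut_apply] at this
    simpa using this
  have hX' := conj_psd U hX
  have hY' := conj_psd U hY
  have key : ∀ i, hA.eigenvalues i =
      ((star (U : Matrix n n ℂ) * X * (U : Matrix n n ℂ)) i i).re -
      ((star (U : Matrix n n ℂ) * Y * (U : Matrix n n ℂ)) i i).re := by
    intro i
    have h1 : (star (U : Matrix n n ℂ) * (X - Y) * (U : Matrix n n ℂ)) i i
        = ((hA.eigenvalues i : ℝ) : ℂ) := by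
      rw [hdiag]; simp [Matrix.diagonal_apply_eq]
    have h2 : star (U : Matrix n n ℂ) * (X - Y) * (U : Matrix n n ℂ)
        = star (U : Matrix n n ℂ) * X * (U : Matrix n n ℂ)
          - star (U : Matrix n n ℂ) * Y * (U : Matrix n n ℂ) := by
      rw [mul_sub, sub_mul]
    rw [h2] at h1
    have := congrArg Complex.re h1
    simpa [Complex.sub_re] using this.symm
  calc ∑ i, |hA.eigenvalues i|
      ≤ ∑ i, (((star (U : Matrix n n ℂ) * X * (U : Matrix n n ℂ)) i i).re +
        ((star (U : Matrix n n ℂ) * Y * (U : Matrix n n ℂ)) i i).re) := by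
        apply Finset.sum_le_sum
        intro i _
        rw [key i]
        have hx := psd_diag_re_nonneg hX' i
        have hy := psd_diag_re_nonneg hY' i
        rw [abs_sub_le_iff]
        constructor <;> linarith
    _ = X.trace.re + Y.trace.re := by
        have e : ∀ M : Matrix n n ℂ, M.trace.re = ∑ i, (M i i).re := fun M => by
          rw [Matrix.trace, Complex.re_sum]; rfl
        rw [Finset.sum_add_distrib, ← trace_conj U X, ← trace_conj U Y, e, e]

lemma exists_psd_decomp {A : Matrix n n ℂ} (hA : A.IsHermitian) :
    ∃ X Y : Matrix n n ℂ, X.PosSemidef ∧ Y.PosSemidef ∧ A = X - Y ∧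
      X.trace.re + Y.trace.re = traceNorm A := by
  set U := hA.eigenvectorUnitary with hU
  refine ⟨(U : Matrix n n ℂ) * diagonal (fun i => ((max (hA.eigenvalues i) 0 : ℝ) : ℂ)) *
      star (U : Matrix n n ℂ),
    (U : Matrix n n ℂ) * diagonal (fun i => ((max (-hA.eigenvalues i) 0 : ℝ) : ℂ)) *
      star (U : Matrix n n ℂ),
    conj_diag_psd U fun i => le_max_right _ _,
    conj_diag_psd U fun i => le_max_right _ _, ?_, ?_⟩
  · have h : (U : Matrix n n ℂ) * diagonal (fun i => ((max (hA.eigenvalues i) 0 : ℝ) : ℂ)) *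
        star (U : Matrix n n ℂ) -
        (U : Matrix n n ℂ) * diagonal (fun i => ((max (-hA.eigenvalues i) 0 : ℝ) : ℂ)) *
        star (U : Matrix n n ℂ)
        = (U : Matrix n n ℂ) * diagonal (fun i => ((hA.eigenvalues i : ℝ) : ℂ)) *
          star (U : Matrix n n ℂ) := by
      rw [← sub_mul, ← mul_sub]
      congr 2
      ext i j
      by_cases hij : i = j <;>
        simp [hij, Matrix.diagonal_apply, ← Complex.ofReal_sub,
          max_zero_sub_max_neg_zero_eq_self]
    rw [h]
    exact hA.spectral_theorem
  · rw [trace_conj_diag, trace_conj_diag, traceNorm_eq_sum_abs hA,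
      Complex.re_sum, Complex.re_sum, ← Finset.sum_add_distrib]
    apply Finset.sum_congr rfl
    intro i _
    simp [max_zero_add_max_neg_zero_eq_abs_self]

lemma channel_pos {D : ℕ}
    {Φ : Matrix (Fin D) (Fin D) ℂ →ₗ[ℂ] Matrix (Fin D) (Fin D) ℂ}
    (hCP : IsCompletelyPositive Φ)
    {N : Matrix (Fin D) (Fin D) ℂ} (hN : N.PosSemidef) : (Φ N).PosSemidef := by
  have hM : (N.submatrix (Prod.fst : Fin D × Fin 1 → Fin D) Prod.fst).PosSemidef :=
    hN.submatrix _
  have h := hCP 1 le_rfl _ hM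
  have heq : Φ N = (extendChannel Φ (N.submatrix Prod.fst Prod.fst)).submatrix
      (fun i : Fin D => ((i, 0) : Fin D × Fin 1)) (fun i : Fin D => ((i, 0) : Fin D × Fin 1)) := by
    rfl
  rw [heq]
  exact h.submatrix _

end Aux

/-- Monotonicity of the minimum trace distance to P under CPTP maps preserving P. -/
theorem monotonicity_traceDist_to_polytope {D : ℕ} (hD : 1 ≤ D)
    (P : Set (Matrix (Fin D) (Fin D) ℂ))
    (hPne : P.Nonempty) (hPcompact : IsCompact P) (hPconvex : Convex ℝ P)
    (hPdens : ∀ σ ∈ P, IsDensityMatrix σ)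
    (Φ : Matrix (Fin D) (Fin D) ℂ →ₗ[ℂ] Matrix (Fin D) (Fin D) ℂ)
    (hTP : ∀ M, (Φ M).trace = M.trace)
    (hCP : IsCompletelyPositive Φ)
    (hΦP : ∀ σ ∈ P, Φ σ ∈ P)
    (ρ : Matrix (Fin D) (Fin D) ℂ) (hρ : IsDensityMatrix ρ) :
    sInf ((fun σ => traceDist (Φ ρ) σ) '' P) ≤ sInf ((fun σ => traceDist ρ σ) '' P) := by
  have hTN : ∀ σ ∈ P, traceDist (Φ ρ) (Φ σ) ≤ traceDist ρ σ := by
    intro σ hσ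
    have hA : (ρ - σ).IsHermitian := hρ.1.1.sub (hPdens σ hσ).1.1
    obtain ⟨X, Y, hX, hY, hXY, htr⟩ := exists_psd_decomp hA
    have hsub : Φ ρ - Φ σ = Φ X - Φ Y := by rw [← map_sub, ← map_sub, hXY]
    have hkey : traceNorm (Φ ρ - Φ σ) ≤ traceNorm (ρ - σ) := by
      rw [hsub]
      calc traceNorm (Φ X - Φ Y) ≤ (Φ X).trace.re + (Φ Y).trace.re :=
            traceNorm_sub_le (channel_pos hCP hX) (channel_pos hCP hY)
        _ = X.trace.re + Y.trace.re := by rw [hTP, hTP]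
        _ = traceNorm (ρ - σ) := htr
    unfold traceDist
    linarith
  have hbdd : BddBelow ((fun σ => traceDist (Φ ρ) σ) '' P) := by
    refine ⟨0, ?_⟩
    rintro b ⟨σ, hσ, rfl⟩
    have := traceNorm_nonneg (Φ ρ - σ)
    unfold traceDist
    linarith
  refine le_csInf (hPne.image _) ?_
  rintro b ⟨σ, hσ, rfl⟩
  exact le_trans (csInf_le hbdd ⟨Φ σ, hΦP σ hσ, rfl⟩) (hTN σ hσ)
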